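/- Let R be a real orthogonal n×n matrix whose eigenvalues are e^{iθ_l}, l = 1,…,n, with 0 < |θ_l| ≤ π for all l (i.e. 1 is not an eigenvalue of R). Then for every vector v ∈ ℝ^n and every positive integer N, ‖(1/(2N)) Σ_{j=0}^{2N-1} R^j v‖ ≤ (π / (2N · min_l |θ_l|)) · ‖v‖. -/

import Mathlib

/-!
The complexification `M` of `R` is unitary, hence normal, so by the continuous functional calculus
the norm of `∑_{j<2N} M^j` is at most the supremum of `|∑_{j<2N} z^j|` over the spectrum of `M`,
i.e. over the eigenvalues `z = e^{iθ_l}`. There the geometric sum is `(z^{2N} - 1)/(z - 1)`, whose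
numerator has modulus at most `2`, while `|z - 1| = 2|sin(θ_l/2)| ≥ 2|θ_l|/π` by Jordan's
inequality. The real orbit sum is the restriction of the complex one to real vectors, so the same
operator-norm bound applies to it.
-/

open Matrix

def toE {n : ℕ} (v : Fin n → ℝ) : EuclideanSpace ℝ (Fin n) := WithLp.toLp 2 v

open scoped Matrix.Norms.L2Operator

theorem norm_geom_sum_le_of_norm_le_one {𝕜 : Type*} [NormedDivisionRing 𝕜] {z : 𝕜}
    (hz : ‖z‖ ≤ 1) (hz1 : z ≠ 1) (m : ℕ) :
    ‖∑ j ∈ Finset.range m, z ^ j‖ ≤ 2 / ‖z - 1‖ := by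
  rw [geom_sum_eq hz1, norm_div]
  gcongr
  calc ‖z ^ m - 1‖ ≤ ‖z ^ m‖ + ‖(1 : 𝕜)‖ := norm_sub_le _ _
    _ ≤ 2 := by
      rw [norm_pow, norm_one]
      linarith [pow_le_one₀ (norm_nonneg z) hz (n := m)]

theorem Complex.two_mul_abs_div_pi_le_norm_exp_mul_I_sub_one {θ : ℝ} (hθ : |θ| ≤ Real.pi) :
    2 * |θ| / Real.pi ≤ ‖Complex.exp (θ * Complex.I) - 1‖ := by
  have hsin := Real.mul_abs_le_abs_sin (x := θ / 2) (by rw [abs_div, abs_two]; linarith)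
  rw [abs_div, abs_two] at hsin
  rw [mul_comm (θ : ℂ), Complex.norm_exp_I_mul_ofReal_sub_one, norm_mul, Real.norm_eq_abs,
    Real.norm_eq_abs, abs_two]
  calc 2 * |θ| / Real.pi = 2 * (2 / Real.pi * (|θ| / 2)) := by ring
    _ ≤ 2 * |Real.sin (θ / 2)| := by gcongr

theorem Complex.norm_geom_sum_exp_mul_I_le {θ : ℝ} (hθ₀ : θ ≠ 0) (hθ : |θ| ≤ Real.pi) (m : ℕ) :
    ‖∑ j ∈ Finset.range m, Complex.exp (θ * Complex.I) ^ j‖ ≤ Real.pi / |θ| := by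
  have hdist := Complex.two_mul_abs_div_pi_le_norm_exp_mul_I_sub_one hθ
  have hpos : 0 < 2 * |θ| / Real.pi := by positivity
  have hne : Complex.exp (θ * Complex.I) ≠ 1 := fun h => by
    rw [h, sub_self, norm_zero] at hdist; linarith
  calc _ ≤ 2 / ‖Complex.exp (θ * Complex.I) - 1‖ :=
        norm_geom_sum_le_of_norm_le_one (by rw [Complex.norm_exp_ofReal_mul_I]) hne m
    _ ≤ 2 / (2 * |θ| / Real.pi) := by gcongr
    _ = Real.pi / |θ| := by field_simp

theorem Matrix.spectrum_subset_range_of_charpoly_eq_prod {K n ι : Type*} [Field K] [Fintype n]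
    [DecidableEq n] [Fintype ι] {A : Matrix n n K} {μ : ι → K}
    (h : A.charpoly = ∏ l, (Polynomial.X - Polynomial.C (μ l))) :
    spectrum K A ⊆ Set.range μ := by
  intro z hz
  rw [Matrix.mem_spectrum_iff_isRoot_charpoly, h, Polynomial.IsRoot, Polynomial.eval_prod,
    Finset.prod_eq_zero_iff] at hz
  obtain ⟨l, -, hl⟩ := hz
  simp only [Polynomial.eval_sub, Polynomial.eval_X, Polynomial.eval_C, sub_eq_zero] at hl
  exact ⟨l, hl.symm⟩

theorem norm_geom_sum_le_of_forall_mem_spectrum {A : Type*} [CStarAlgebra A] {a : A}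
    [IsStarNormal a] {c : ℝ} (hc : 0 ≤ c) (m : ℕ)
    (h : ∀ z ∈ spectrum ℂ a, ‖∑ j ∈ Finset.range m, z ^ j‖ ≤ c) :
    ‖∑ j ∈ Finset.range m, a ^ j‖ ≤ c := by
  have hcfc : cfc (fun z : ℂ => ∑ j ∈ Finset.range m, z ^ j) a = ∑ j ∈ Finset.range m, a ^ j := by
    simpa [Polynomial.eval_finsetSum] using
      cfc_polynomial (∑ j ∈ Finset.range m, Polynomial.X ^ j) a
  rw [← hcfc]
  exact norm_cfc_le hc h

theorem EuclideanSpace.norm_toLp_ofReal_comp {n : Type*} [Fintype n] (w : n → ℝ) :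
    ‖WithLp.toLp 2 (Complex.ofReal ∘ w)‖ = ‖WithLp.toLp 2 w‖ := by
  simp [EuclideanSpace.norm_eq]

theorem Matrix.norm_toLp_mulVec_le_l2_opNorm_map_ofReal {m n : Type*} [Fintype m] [Fintype n]
    [DecidableEq n] (T : Matrix m n ℝ) (v : EuclideanSpace ℝ n) :
    ‖WithLp.toLp 2 (T *ᵥ v)‖ ≤ ‖T.map Complex.ofReal‖ * ‖v‖ := by
  have hmap : T.map Complex.ofReal *ᵥ (Complex.ofReal ∘ v) = Complex.ofReal ∘ (T *ᵥ v) :=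
    funext fun i => (RingHom.map_mulVec Complex.ofRealHom T v i).symm
  have key := (T.map Complex.ofReal).l2_opNorm_mulVec (WithLp.toLp 2 (Complex.ofReal ∘ v))
  rw [WithLp.ofLp_toLp, hmap] at key
  change ‖WithLp.toLp 2 (Complex.ofReal ∘ (T *ᵥ v))‖ ≤ _ at key
  rwa [EuclideanSpace.norm_toLp_ofReal_comp, EuclideanSpace.norm_toLp_ofReal_comp] at key

theorem Matrix.isStarNormal_map_ofReal {n : Type*} [Fintype n] [DecidableEq n]
    {R : Matrix n n ℝ} (hR : R * Rᵀ = 1) : IsStarNormal (R.map Complex.ofReal) := by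
  refine isStarNormal_of_mem_unitary (Matrix.mem_unitaryGroup_iff.mpr ?_)
  rw [star_eq_conjTranspose, ← conjTranspose_map _ (fun _ => by simp),
    conjTranspose_eq_transpose_of_trivial]
  have := congrArg (Matrix.map · Complex.ofRealHom) hR
  simp only [Matrix.map_mul, Matrix.map_one _ (map_zero _) (map_one _)] at this
  exact this

/-- if `R` is orthogonal with eigenvalues `e^{iθ_l}`,
`0 < |θ_l| ≤ π`, then for every `v` and `N ≥ 1`,
`‖(1/(2N)) Σ_{j<2N} R^j v‖ ≤ (π/(2N min_l |θ_l|)) ‖v‖`. -/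
theorem average_orbit_bound (n : ℕ) (hn : 0 < n)
    (R : Matrix (Fin n) (Fin n) ℝ) (hR : R * Rᵀ = 1)
    (θ : Fin n → ℝ) (hθ : ∀ l, 0 < |θ l| ∧ |θ l| ≤ Real.pi)
    (hev : (R.map (Complex.ofReal)).charpoly =
      ∏ l, (Polynomial.X - Polynomial.C (Complex.exp (θ l * Complex.I)))) :
    ∀ (v : EuclideanSpace ℝ (Fin n)) (N : ℕ), 0 < N →
      ‖(1 / (2 * (N : ℝ))) • toE (∑ j ∈ Finset.range (2 * N), (R ^ j).mulVec v)‖ ≤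
        (Real.pi / (2 * (N : ℝ) *
          Finset.univ.inf' ⟨⟨0, hn⟩, Finset.mem_univ _⟩ (fun l => |θ l|))) * ‖v‖ := by
  intro v N _
  set θmin := Finset.univ.inf' ⟨⟨0, hn⟩, Finset.mem_univ _⟩ (fun l => |θ l|)
  have hθmin : 0 < θmin := (Finset.lt_inf'_iff _).mpr fun l _ => (hθ l).1
  have := Matrix.isStarNormal_map_ofReal hR
  have hgeom : ‖∑ j ∈ Finset.range (2 * N), R.map Complex.ofReal ^ j‖ ≤ Real.pi / θmin := by
    refine norm_geom_sum_le_of_forall_mem_spectrum (by positivity) _ fun z hz => ?_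
    obtain ⟨l, rfl⟩ := Matrix.spectrum_subset_range_of_charpoly_eq_prod hev hz
    calc _ ≤ Real.pi / |θ l| :=
          Complex.norm_geom_sum_exp_mul_I_le (abs_pos.mp (hθ l).1) (hθ l).2 _
      _ ≤ Real.pi / θmin := by gcongr; exact Finset.inf'_le _ (Finset.mem_univ l)
  have hmap : (∑ j ∈ Finset.range (2 * N), R ^ j).map Complex.ofReal
      = ∑ j ∈ Finset.range (2 * N), R.map Complex.ofReal ^ j :=
    map_sum (Complex.ofRealHom.mapMatrix) _ _ |>.trans
      (Finset.sum_congr rfl fun j _ => map_pow Complex.ofRealHom.mapMatrix R j)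
  have horbit : ‖toE (∑ j ∈ Finset.range (2 * N), (R ^ j).mulVec v)‖ ≤ Real.pi / θmin * ‖v‖ := by
    rw [← Matrix.sum_mulVec]
    calc _ ≤ _ := Matrix.norm_toLp_mulVec_le_l2_opNorm_map_ofReal _ v
      _ ≤ Real.pi / θmin * ‖v‖ := by rw [hmap]; gcongr
  rw [norm_smul, Real.norm_of_nonneg (by positivity)]
  calc _ ≤ 1 / (2 * (N : ℝ)) * (Real.pi / θmin * ‖v‖) := by gcongr
    _ = _ := by ring
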